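/- arXiv:0809.0502 — 3 statements merged into one kernel-verified Lean document; each statement's English description precedes it below -/
import Mathlib

section
/- Every c_i (2 ≤ i ≤ p) is invariant, i.e. η_R(c_i) = c_i, and the set of invariant elements {g ∈ ℚ[a_1,…,a_p] : η_R(g) = g} is exactly the ℚ-subalgebra of ℚ[a_1,…,a_p] generated by c_2, c_3, …, c_p. -/
/-!
Fix a prime `p`.  `Apoly p = ℚ[a_1,…,a_p]` (the variable `⟨i-1⟩ : Fin p` stands for `a_i`),
`Γ = (Apoly p)[r]`, and `etaR` is the unique ℚ-algebra map with
`η_R(a_i) = ∑_{j=0}^{i} C(p-j, i-j) a_j r^{i-j}` (with `a_0 = 1`).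
`cgen p i` is the element `c_i = ∑_{j=0}^{i} C(p-j,i-j) (-1)^j a_j a_1^{i-j} p^j`.
-/

/-- The polynomial ring `ℚ[a_1,…,a_p]`. -/
abbrev Apoly (p : ℕ) : Type := MvPolynomial (Fin p) ℚ

/-- `av p j` is the generator `a_j`, with the convention `a_0 = 1`. -/
noncomputable def av (p : ℕ) (j : ℕ) : Apoly p :=
  if j = 0 then 1 else if h : 1 ≤ j ∧ j ≤ p then MvPolynomial.X ⟨j - 1, by omega⟩ else 0

/-- The right unit `η_R : ℚ[a_1,…,a_p] → ℚ[a_1,…,a_p][r]`, determined by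
`η_R(a_i) = ∑_{j=0}^{i} C(p-j, i-j)·a_j·r^{i-j}` (here `a_{k+1}` is the variable `k : Fin p`). -/
noncomputable def etaR (p : ℕ) : Apoly p →ₐ[ℚ] Polynomial (Apoly p) :=
  MvPolynomial.aeval (fun k : Fin p =>
    ∑ j ∈ Finset.range (k.1 + 2),
      (Nat.choose (p - j) (k.1 + 1 - j) : Polynomial (Apoly p)) *
        Polynomial.C (av p j) * Polynomial.X ^ (k.1 + 1 - j))

/-- The invariant elements `c_i = ∑_{j=0}^{i} C(p-j,i-j)·(-1)^j·a_j·a_1^{i-j}·p^j`. -/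
noncomputable def cgen (p i : ℕ) : Apoly p :=
  ∑ j ∈ Finset.range (i + 1),
    (Nat.choose (p - j) (i - j) : Apoly p) * (-1 : Apoly p) ^ j * av p j *
      (av p 1) ^ (i - j) * (p : Apoly p) ^ j

/-!
Since `η_R(a_1) = a_1 + p r`, substituting `r = u := -a_1/p` in `η_R` gives a ℚ-algebra
endomorphism `ψ` of `ℚ[a_1,…,a_p]` fixing every invariant. The elements `ψ(a_i)` are the
coefficients of the depressed polynomial `f(x + u)`; thus `ψ(a_1) = 0` and
`ψ(a_i) = (-p)^{-i} c_i`, so every invariant `g = ψ(g)` lies in the algebra generated by the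
`c_i`. Conversely `f(x + u)` is invariant, because `η_R` sends `f(x)` to `f(x + r)` and `u` to
`u - r`.
-/

open Polynomial Finset

section ShiftedCoefficients

variable {R : Type*} [CommRing R]

theorem coeff_sum_C_mul_X_pow_sub (n : ℕ) (e : ℕ → R) {i : ℕ} (hi : i ≤ n) :
    (∑ j ∈ range (n + 1), C (e j) * X ^ (n - j)).coeff (n - i) = e i := by
  simp only [finsetSum_coeff, coeff_C_mul_X_pow]
  rw [Finset.sum_eq_single i (fun j hj hji => if_neg (by simp at hj; omega))
    (fun h => absurd (mem_range.2 (by omega)) h), if_pos rfl]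

theorem coeff_sum_C_mul_comp_X_add_C (n : ℕ) (b : ℕ → R) (t : R) (k : ℕ) :
    ((∑ j ∈ range (n + 1), C (b j) * X ^ (n - j)).comp (X + C t)).coeff k =
      ∑ j ∈ range (n + 1), b j * t ^ (n - j - k) * ((n - j).choose k : R) := by
  simp only [Polynomial.sum_comp, mul_comp, C_comp, X_pow_comp, finsetSum_coeff, coeff_C_mul,
    coeff_X_add_C_pow, mul_assoc]

theorem sum_C_mul_X_pow_sub_comp_X_add_C (n : ℕ) (b : ℕ → R) (t : R) :
    (∑ j ∈ range (n + 1), C (b j) * X ^ (n - j)).comp (X + C t) =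
      ∑ i ∈ range (n + 1),
        C (∑ j ∈ range (i + 1), ((n - j).choose (i - j) : R) * b j * t ^ (i - j)) *
          X ^ (n - i) := by
  ext k
  rw [coeff_sum_C_mul_comp_X_add_C]
  by_cases hk : k ≤ n
  · obtain ⟨i, hi, rfl⟩ : ∃ i ≤ n, k = n - i := ⟨n - k, by omega, by omega⟩
    rw [coeff_sum_C_mul_X_pow_sub _ _ hi,
      ← Finset.sum_subset (range_subset_range.2 (Nat.succ_le_succ hi))]
    · refine Finset.sum_congr rfl fun j hj => ?_
      have hji : j ≤ i := Nat.lt_succ_iff.1 (mem_range.1 hj)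
      rw [Nat.choose_symm_of_eq_add (show n - j = n - i + (i - j) by omega),
        show n - j - (n - i) = i - j by omega]
      ring
    · intro j hjn hj
      rw [Nat.choose_eq_zero_of_lt (by simp at hj hjn; omega), Nat.cast_zero, mul_zero]
  · rw [Finset.sum_eq_zero fun j _ => by
      rw [Nat.choose_eq_zero_of_lt (by omega), Nat.cast_zero, mul_zero]]
    simp only [finsetSum_coeff, coeff_C_mul_X_pow]
    exact (Finset.sum_eq_zero fun j _ => if_neg (by omega)).symm

end ShiftedCoefficients

theorem MvPolynomial.algHom_apply_mem {σ R A : Type*} [CommSemiring R] [CommSemiring A]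
    [Algebra R A] (f : MvPolynomial σ R →ₐ[R] A) {S : Subalgebra R A}
    (h : ∀ k, f (MvPolynomial.X k) ∈ S) (g : MvPolynomial σ R) : f g ∈ S := by
  have hle : f.range ≤ S := by
    rw [MvPolynomial.aeval_unique f, MvPolynomial.aeval_range]
    exact Algebra.adjoin_le (Set.range_subset_iff.2 h)
  exact hle ⟨g, rfl⟩

noncomputable def genericPoly (p : ℕ) : (Apoly p)[X] :=
  ∑ j ∈ range (p + 1), C (av p j) * X ^ (p - j)

noncomputable def depressingShift (p : ℕ) : Apoly p := MvPolynomial.C (-(p : ℚ)⁻¹) * av p 1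

noncomputable def depress (p : ℕ) : Apoly p →ₐ[ℚ] Apoly p :=
  ((aeval (depressingShift p)).restrictScalars ℚ).comp (etaR p)

noncomputable def etaRInvariants (p : ℕ) : Subalgebra ℚ (Apoly p) :=
  AlgHom.equalizer (etaR p) (CAlgHom)

theorem av_succ {p : ℕ} (k : Fin p) : av p (k + 1) = MvPolynomial.X k := by
  rw [av, if_neg k.val.succ_ne_zero, dif_pos ⟨by omega, k.isLt⟩]
  rfl

theorem etaR_av {p i : ℕ} (hi : i ≤ p) :
    etaR p (av p i) =
      ∑ j ∈ range (i + 1),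
        ((p - j).choose (i - j) : (Apoly p)[X]) * C (av p j) * X ^ (i - j) := by
  rcases Nat.eq_zero_or_pos i with rfl | hi0
  · simp [av]
  · obtain ⟨k, rfl⟩ : ∃ k : Fin p, i = k + 1 := ⟨⟨i - 1, by omega⟩, by simp; omega⟩
    rw [av_succ, etaR, MvPolynomial.aeval_X]

theorem etaR_av_one {p : ℕ} (hp : 1 ≤ p) :
    etaR p (av p 1) = (p : (Apoly p)[X]) * X + C (av p 1) := by
  rw [etaR_av hp]
  simp [sum_range_succ, av]

theorem map_etaR_genericPoly (p : ℕ) :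
    (genericPoly p).map (etaR p : Apoly p →+* (Apoly p)[X]) =
      ((genericPoly p).map C).comp (X + C X) := by
  simp only [genericPoly, Polynomial.map_sum, Polynomial.map_mul, map_C, Polynomial.map_pow,
    map_X, sum_C_mul_X_pow_sub_comp_X_add_C]
  refine Finset.sum_congr rfl fun i hi => ?_
  rw [RingHom.coe_coe, etaR_av (Nat.lt_succ_iff.1 (mem_range.1 hi))]

theorem mem_etaRInvariants {p : ℕ} {g : Apoly p} : g ∈ etaRInvariants p ↔ etaR p g = C g :=
  Iff.rfl

theorem etaR_depressingShift {p : ℕ} (hp : (p : ℚ) ≠ 0) :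
    etaR p (depressingShift p) = C (depressingShift p) - X := by
  have hp1 : 1 ≤ p := Nat.one_le_iff_ne_zero.2 (by exact_mod_cast hp)
  have hinv : C (MvPolynomial.C (-(p : ℚ)⁻¹)) * (p : (Apoly p)[X]) = -1 := by
    rw [← map_natCast (C.comp MvPolynomial.C) p, RingHom.comp_apply, ← map_mul, ← map_mul,
      neg_mul, inv_mul_cancel₀ hp, map_neg, map_one, map_neg, map_one]
  rw [depressingShift, map_mul, etaR_av_one hp1, ← MvPolynomial.algebraMap_eq, AlgHom.commutes,
    Polynomial.algebraMap_apply, MvPolynomial.algebraMap_eq, C_mul]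
  linear_combination X * hinv

theorem depress_av {p i : ℕ} (hi : i ≤ p) :
    depress p (av p i) =
      ∑ j ∈ range (i + 1), ((p - j).choose (i - j) : Apoly p) * av p j *
        depressingShift p ^ (i - j) := by
  simp only [depress, AlgHom.comp_apply, AlgHom.restrictScalars_apply, etaR_av hi, map_sum,
    map_mul, map_natCast, aeval_C, aeval_X, map_pow, Algebra.algebraMap_self, RingHom.id_apply]

theorem genericPoly_comp_X_add_C_depressingShift (p : ℕ) :
    (genericPoly p).comp (X + C (depressingShift p)) =
      ∑ i ∈ range (p + 1), C (depress p (av p i)) * X ^ (p - i) := by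
  rw [genericPoly, sum_C_mul_X_pow_sub_comp_X_add_C]
  exact Finset.sum_congr rfl fun i hi => by
    rw [depress_av (Nat.lt_succ_iff.1 (mem_range.1 hi))]

theorem map_etaR_genericPoly_comp {p : ℕ} (hp : (p : ℚ) ≠ 0) :
    ((genericPoly p).comp (X + C (depressingShift p))).map (etaR p : Apoly p →+* (Apoly p)[X]) =
      ((genericPoly p).comp (X + C (depressingShift p))).map C := by
  rw [Polynomial.map_comp, map_etaR_genericPoly, comp_assoc, Polynomial.map_comp]
  congr 1
  simp only [Polynomial.map_add, map_X, map_C, RingHom.coe_coe, etaR_depressingShift hp,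
    add_comp, X_comp, C_comp, map_sub]
  ring

theorem depress_av_mem_etaRInvariants {p i : ℕ} (hp : (p : ℚ) ≠ 0) (hi : i ≤ p) :
    depress p (av p i) ∈ etaRInvariants p := by
  have h := congrArg (coeff · (p - i)) (map_etaR_genericPoly_comp hp)
  simp only [genericPoly_comp_X_add_C_depressingShift, Polynomial.map_sum, Polynomial.map_mul,
    map_C, Polynomial.map_pow, map_X, coeff_sum_C_mul_X_pow_sub _ _ hi] at h
  exact h

theorem depress_mem_etaRInvariants {p : ℕ} (hp : (p : ℚ) ≠ 0) (g : Apoly p) :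
    depress p g ∈ etaRInvariants p :=
  MvPolynomial.algHom_apply_mem _
    (fun k => av_succ k ▸ depress_av_mem_etaRInvariants hp k.isLt) g

theorem depress_av_one {p : ℕ} (hp : (p : ℚ) ≠ 0) : depress p (av p 1) = 0 := by
  have hp1 : 1 ≤ p := Nat.one_le_iff_ne_zero.2 (by exact_mod_cast hp)
  have hunit : (p : Apoly p) * MvPolynomial.C (p : ℚ)⁻¹ = 1 := by
    rw [← map_natCast MvPolynomial.C, ← map_mul, mul_inv_cancel₀ hp, map_one]
  simp only [depress, AlgHom.comp_apply, AlgHom.restrictScalars_apply, etaR_av_one hp1,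
    map_add, map_mul, map_natCast, aeval_X, aeval_C, Algebra.algebraMap_self, RingHom.id_apply,
    depressingShift, map_neg]
  linear_combination (-av p 1) * hunit

theorem depress_of_mem_etaRInvariants {p : ℕ} {g : Apoly p} (hg : g ∈ etaRInvariants p) :
    depress p g = g := by
  simp [depress, mem_etaRInvariants.1 hg]

theorem cgen_eq_smul_depress_av {p i : ℕ} (hp : (p : ℚ) ≠ 0) (hi : i ≤ p) :
    cgen p i = (-(p : ℚ)) ^ i • depress p (av p i) := by
  rw [cgen, depress_av hi, Finset.smul_sum]
  refine Finset.sum_congr rfl fun j hj => ?_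
  obtain ⟨m, rfl⟩ : ∃ m, i = j + m := ⟨i - j, by simp at hj; omega⟩
  have hscalar : (-(p : ℚ)) ^ (j + m) * (-(p : ℚ)⁻¹) ^ m = (-1) ^ j * (p : ℚ) ^ j := by
    rw [pow_add, mul_assoc, ← mul_pow, neg_mul_neg, mul_inv_cancel₀ hp, one_pow, mul_one,
      neg_pow]
  have hC : MvPolynomial.C ((-(p : ℚ)) ^ (j + m)) * MvPolynomial.C (-(p : ℚ)⁻¹) ^ m =
      (-1 : Apoly p) ^ j * (p : Apoly p) ^ j := by
    rw [← map_pow, ← map_mul, hscalar, map_mul, map_pow, map_pow, map_neg, map_one, map_natCast]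
  rw [Nat.add_sub_cancel_left, MvPolynomial.smul_eq_C_mul, depressingShift, mul_pow]
  linear_combination (-((p - j).choose m : Apoly p) * av p j * av p 1 ^ m) * hC

theorem depress_mem_adjoin_cgen {p : ℕ} (hp : (p : ℚ) ≠ 0) (g : Apoly p) :
    depress p g ∈
      Algebra.adjoin ℚ {x : Apoly p | ∃ i : ℕ, 2 ≤ i ∧ i ≤ p ∧ x = cgen p i} := by
  refine MvPolynomial.algHom_apply_mem _ (fun k => ?_) g
  rw [← av_succ]
  rcases Nat.eq_zero_or_pos k.val with hk | hk
  · rw [hk, depress_av_one hp]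
    exact zero_mem _
  · have hpow : (-(p : ℚ)) ^ (k.val + 1) ≠ 0 := pow_ne_zero _ (neg_ne_zero.2 hp)
    rw [← inv_smul_smul₀ hpow (depress p _), ← cgen_eq_smul_depress_av hp k.isLt]
    refine Subalgebra.smul_mem _ (Algebra.subset_adjoin ?_) _
    exact ⟨_, by omega, k.isLt, rfl⟩

/-- Every `c_i` (`2 ≤ i ≤ p`) is invariant, and the invariants are exactly the
ℚ-subalgebra generated by `c_2, …, c_p`. -/
theorem invariants_eq_adjoin_c (p : ℕ) (hp : p.Prime) :
    (∀ i : ℕ, 2 ≤ i → i ≤ p → etaR p (cgen p i) = Polynomial.C (cgen p i)) ∧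
    {g : Apoly p | etaR p g = Polynomial.C g} =
      ↑(Algebra.adjoin ℚ {x : Apoly p | ∃ i : ℕ, 2 ≤ i ∧ i ≤ p ∧ x = cgen p i}) := by
  have hp0 : (p : ℚ) ≠ 0 := Nat.cast_ne_zero.2 hp.ne_zero
  have hcgen (i : ℕ) (hi : i ≤ p) : cgen p i ∈ etaRInvariants p := by
    rw [cgen_eq_smul_depress_av hp0 hi]
    exact Subalgebra.smul_mem _ (depress_mem_etaRInvariants hp0 _) _
  refine ⟨fun i _ hi => hcgen i hi, Set.Subset.antisymm (fun g hg => ?_) ?_⟩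
  · rw [← depress_of_mem_etaRInvariants hg]
    exact depress_mem_adjoin_cgen hp0 g
  · refine Algebra.adjoin_le (S := etaRInvariants p) ?_
    rintro _ ⟨i, -, hi, rfl⟩
    exact hcgen i hi
end

section
/- Each of the four elements c_2, c_3, c_4, c_5 of A is invariant: η_R(c_i) = c_i in Γ for i = 2, 3, 4, 5. -/
/-!
`Z5 = ℤ_{(5)}` is the localization of `ℤ` at the prime `(5)`, `A5 = ℤ_{(5)}[a_1,…,a_5]`
(the variable `⟨i-1⟩ : Fin 5` is `a_i`), and `etaR5 : A5 → A5[r]` is the right unit of the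
Gorbounov–Hopkins–Mahowald Hopf algebroid at `p = 5`, determined by
`η_R(a_i) = ∑_{j=0}^{i} C(5-j, i-j)·a_j·r^{i-j}` with `a_0 = 1` (equivalently, the
`η_R(a_i)` are the coefficients of `f(x+r)` for `f(x) = x^5 + a_1 x^4 + ⋯ + a_5`).
-/

instance span5_isPrime : (Ideal.span {(5 : ℤ)}).IsPrime := by
  rw [Ideal.span_singleton_prime (by norm_num)]
  exact Int.prime_iff_natAbs_prime.mpr (by norm_num)

/-- The localization `ℤ_{(5)}` of `ℤ` at the prime ideal `(5)`. -/
abbrev Z5 : Type := Localization.AtPrime (Ideal.span {(5 : ℤ)})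

/-- The polynomial ring `A = ℤ_{(5)}[a_1,…,a_5]`. -/
abbrev A5 : Type := MvPolynomial (Fin 5) Z5

/-- `av5 j` is the generator `a_j`, with the convention `a_0 = 1`. -/
noncomputable def av5 (j : ℕ) : A5 :=
  if j = 0 then 1 else if h : 1 ≤ j ∧ j ≤ 5 then MvPolynomial.X ⟨j - 1, by omega⟩ else 0

/-- The right unit `η_R : A → Γ = A[r]`. -/
noncomputable def etaR5 : A5 →ₐ[Z5] Polynomial A5 :=
  MvPolynomial.aeval (fun k : Fin 5 =>
    ∑ j ∈ Finset.range (k.1 + 2),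
      (Nat.choose (5 - j) (k.1 + 1 - j) : Polynomial A5) *
        Polynomial.C (av5 j) * Polynomial.X ^ (k.1 + 1 - j))

/-- The generators `a_1, …, a_5` of `A`. -/
noncomputable def a1 : A5 := MvPolynomial.X 0
noncomputable def a2 : A5 := MvPolynomial.X 1
noncomputable def a3 : A5 := MvPolynomial.X 2
noncomputable def a4 : A5 := MvPolynomial.X 3
noncomputable def a5 : A5 := MvPolynomial.X 4

/-- `c_2 = −2a_1² + 5a_2`. -/
noncomputable def c2 : A5 := -2 * a1 ^ 2 + 5 * a2
/-- `c_3 = 4a_1³ − 15a_1a_2 + 25a_3`. -/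
noncomputable def c3 : A5 := 4 * a1 ^ 3 - 15 * a1 * a2 + 25 * a3
/-- `c_4 = −3a_1⁴ + 15a_1²a_2 − 50a_1a_3 + 125a_4`. -/
noncomputable def c4 : A5 := -3 * a1 ^ 4 + 15 * a1 ^ 2 * a2 - 50 * a1 * a3 + 125 * a4
/-- `c_5 = 4a_1⁵ − 25a_1³a_2 + 125a_1²a_3 − 625a_1a_4 + 3125a_5`. -/
noncomputable def c5 : A5 :=
  4 * a1 ^ 5 - 25 * a1 ^ 3 * a2 + 125 * a1 ^ 2 * a3 - 625 * a1 * a4 + 3125 * a5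

/-!
Put `y = 5x + a_1`. Expanding `5⁵ f(x)` in powers of `y` gives
`y⁵ + 5c_2 y³ + 5c_3 y² + 5c_4 y + c_5`. Since `η_R` replaces `f(x)` by `f(x + r)` and `a_1` by
`a_1 + 5r`, it leaves `y` unchanged, hence also these coefficients.
-/

open Polynomial

lemma av5_zero : av5 0 = 1 := rfl
lemma av5_one : av5 1 = a1 := rfl
lemma av5_two : av5 2 = a2 := rfl
lemma av5_three : av5 3 = a3 := rfl
lemma av5_four : av5 4 = a4 := rfl
lemma av5_five : av5 5 = a5 := rfl

lemma etaR5_av5 {i : ℕ} (h1 : 1 ≤ i) (h5 : i ≤ 5) :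
    etaR5 (av5 i) = ∑ j ∈ Finset.range (i + 1),
      (Nat.choose (5 - j) (i - j) : A5[X]) * C (av5 j) * X ^ (i - j) := by
  obtain ⟨k, rfl⟩ := Nat.exists_eq_add_of_le' h1
  have hk : k < 5 := by omega
  have : av5 (k + 1) = MvPolynomial.X ⟨k, hk⟩ := by simp [av5, hk]
  rw [this, etaR5, MvPolynomial.aeval_X]

lemma etaR5_a1 : etaR5 a1 = C a1 + 5 * X := by
  rw [← av5_one, etaR5_av5 (by norm_num) (by norm_num)]
  simp only [Finset.sum_range_succ, Finset.sum_range_zero, Nat.reduceAdd, Nat.reduceSub, Nat.choose,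
    av5_zero, av5_one, map_one]
  push_cast
  ring

lemma etaR5_a2 : etaR5 a2 = C a2 + 4 * C a1 * X + 10 * X ^ 2 := by
  rw [← av5_two, etaR5_av5 (by norm_num) (by norm_num)]
  simp only [Finset.sum_range_succ, Finset.sum_range_zero, Nat.reduceAdd, Nat.reduceSub, Nat.choose,
    av5_zero, av5_one, av5_two, map_one]
  push_cast
  ring

lemma etaR5_a3 :
    etaR5 a3 = C a3 + 3 * C a2 * X + 6 * C a1 * X ^ 2 + 10 * X ^ 3 := by
  rw [← av5_three, etaR5_av5 (by norm_num) (by norm_num)]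
  simp only [Finset.sum_range_succ, Finset.sum_range_zero, Nat.reduceAdd, Nat.reduceSub, Nat.choose,
    av5_zero, av5_one, av5_two, av5_three, map_one]
  push_cast
  ring

lemma etaR5_a4 :
    etaR5 a4 = C a4 + 2 * C a3 * X + 3 * C a2 * X ^ 2 + 4 * C a1 * X ^ 3 + 5 * X ^ 4 := by
  rw [← av5_four, etaR5_av5 (by norm_num) (by norm_num)]
  simp only [Finset.sum_range_succ, Finset.sum_range_zero, Nat.reduceAdd, Nat.reduceSub, Nat.choose,
    av5_zero, av5_one, av5_two, av5_three, av5_four, map_one]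
  push_cast
  ring

lemma etaR5_a5 :
    etaR5 a5 = C a5 + C a4 * X + C a3 * X ^ 2 + C a2 * X ^ 3 + C a1 * X ^ 4 + X ^ 5 := by
  rw [← av5_five, etaR5_av5 (by norm_num) (by norm_num)]
  simp only [Finset.sum_range_succ, Finset.sum_range_zero, Nat.reduceAdd, Nat.reduceSub, Nat.choose,
    av5_zero, av5_one, av5_two, av5_three, av5_four, av5_five, map_one]
  push_cast
  ring

lemma etaR5_c2 : etaR5 c2 = C c2 := by
  simp only [c2, map_add, map_mul, map_pow, map_neg, map_ofNat, etaR5_a1, etaR5_a2]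
  ring

lemma etaR5_c3 : etaR5 c3 = C c3 := by
  simp only [c3, map_add, map_sub, map_mul, map_pow, map_ofNat, etaR5_a1, etaR5_a2, etaR5_a3]
  ring

lemma etaR5_c4 : etaR5 c4 = C c4 := by
  simp only [c4, map_add, map_sub, map_mul, map_pow, map_neg, map_ofNat,
    etaR5_a1, etaR5_a2, etaR5_a3, etaR5_a4]
  ring

lemma etaR5_c5 : etaR5 c5 = C c5 := by
  simp only [c5, map_add, map_sub, map_mul, map_pow, map_ofNat,
    etaR5_a1, etaR5_a2, etaR5_a3, etaR5_a4, etaR5_a5]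
  ring

/-- Each of `c_2, c_3, c_4, c_5` is invariant: `η_R(c_i) = c_i`. -/
theorem c_invariant :
    etaR5 c2 = Polynomial.C c2 ∧ etaR5 c3 = Polynomial.C c3 ∧
    etaR5 c4 = Polynomial.C c4 ∧ etaR5 c5 = Polynomial.C c5 :=
  ⟨etaR5_c2, etaR5_c3, etaR5_c4, etaR5_c5⟩
end

section
/- Let ρ : A → 𝔽_5[a_2,a_3,a_4] be the ring homomorphism reducing ℤ_{(5)} modulo 5 and sending a_1 ↦ 0, a_5 ↦ 0, and a_i ↦ a_i for i = 2,3,4. Then ρ(Δ) = a_4^5 − 2a_3^4a_4^2 − a_2a_3^2a_4^3 + 2a_2^2a_4^4 + a_2^3a_3^2a_4^2 + a_2^4a_4^3. -/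
/-- The polynomial `5^{15}·Δ` expressed in the `c_i`. -/
noncomputable def discRHS : A5 :=
  -100 * c2 ^ 3 * c3 ^ 2 * c4 ^ 2 - 135 * c3 ^ 4 * c4 ^ 2 + 400 * c2 ^ 4 * c4 ^ 3
    + 720 * c2 * c3 ^ 2 * c4 ^ 3 - 640 * c2 ^ 2 * c4 ^ 4 + 256 * c4 ^ 5
    + 80 * c2 ^ 3 * c3 ^ 3 * c5 + 108 * c3 ^ 5 * c5 - 360 * c2 ^ 4 * c3 * c4 * c5
    - 630 * c2 * c3 ^ 3 * c4 * c5 + 560 * c2 ^ 2 * c3 * c4 ^ 2 * c5 - 320 * c3 * c4 ^ 3 * c5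
    + 108 * c2 ^ 5 * c5 ^ 2 + 165 * c2 ^ 2 * c3 ^ 2 * c5 ^ 2 - 180 * c2 ^ 3 * c4 * c5 ^ 2
    + 90 * c3 ^ 2 * c4 * c5 ^ 2 + 80 * c2 * c4 ^ 2 * c5 ^ 2 - 30 * c2 * c3 * c5 ^ 3 + c5 ^ 4

instance : Fact (Nat.Prime 5) := ⟨by norm_num⟩

lemma castRingHom_isUnit :
    ∀ y : (Ideal.span {(5 : ℤ)}).primeCompl, IsUnit (Int.castRingHom (ZMod 5) y) := by
  intro y
  have h : ((y : ℤ) : ZMod 5) ≠ 0 := by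
    intro h0
    exact y.2 (Ideal.mem_span_singleton.mpr
      ((ZMod.intCast_zmod_eq_zero_iff_dvd _ 5).mp h0))
  simpa [Int.coe_castRingHom] using h.isUnit

/-- The residue map `ℤ_{(5)} → 𝔽_5`, reduction modulo `5`. -/
noncomputable def resMap : Z5 →+* ZMod 5 := IsLocalization.lift castRingHom_isUnit

/-- The reduction `ρ : A → 𝔽_5[a_2,a_3,a_4]`, reducing `ℤ_{(5)}` modulo `5` and sending
`a_1 ↦ 0`, `a_5 ↦ 0`, and `a_i ↦ a_i` for `i = 2,3,4` (the variable `j : Fin 3` in the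
target is `a_{j+2}`). -/
noncomputable def rho : A5 →+* MvPolynomial (Fin 3) (ZMod 5) :=
  MvPolynomial.eval₂Hom ((MvPolynomial.C : ZMod 5 →+* MvPolynomial (Fin 3) (ZMod 5)).comp resMap)
    (fun i : Fin 5 =>
      if i = 1 then MvPolynomial.X 0
      else if i = 2 then MvPolynomial.X 1
      else if i = 3 then MvPolynomial.X 2
      else 0)

/-!
Specialising `a₁ = a₅ = 0` makes `c₅` vanish and turns `c_i` into `5^{i-1} a_i` for `i = 2, 3, 4`,
so each surviving term of the formula for `5^{15}·Δ` is divisible by `5^{15}` in `A`. What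
remains is the discriminant of `x(x⁴ + a₂x² + a₃x + a₄)`, namely `a₄²` times the quartic
discriminant, and the claim is its reduction modulo `5`. Since `ρ` already kills `a₁` and `a₅`,
it factors through this specialisation.
-/

/-- The discriminant of the depressed quartic `x⁴ + p x² + q x + r`. -/
def quarticDisc {R : Type*} [CommRing R] (p q r : R) : R :=
  256 * r ^ 3 - 128 * p ^ 2 * r ^ 2 + 144 * p * q ^ 2 * r - 27 * q ^ 4 + 16 * p ^ 4 * r
    - 4 * p ^ 3 * q ^ 2

theorem map_quarticDisc {R S : Type*} [CommRing R] [CommRing S] (f : R →+* S) (p q r : R) :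
    f (quarticDisc p q r) = quarticDisc (f p) (f q) (f r) := by
  simp only [quarticDisc, map_sub, map_add, map_mul, map_pow, map_ofNat]

theorem quarticDisc_of_charP_five {R : Type*} [CommRing R] [CharP R 5] (p q r : R) :
    quarticDisc p q r =
      r ^ 3 + 2 * p ^ 2 * r ^ 2 - p * q ^ 2 * r - 2 * q ^ 4 + p ^ 4 * r + p ^ 3 * q ^ 2 := by
  have h5 : ((5 : ℕ) : R) = 0 := CharP.cast_eq_zero R 5
  unfold quarticDisc
  linear_combination
    (51 * r ^ 3 - 26 * p ^ 2 * r ^ 2 + 29 * p * q ^ 2 * r - 5 * q ^ 4 + 3 * p ^ 4 * r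
      - p ^ 3 * q ^ 2) * h5

instance : CharZero Z5 :=
  charZero_of_injective_algebraMap
    (IsLocalization.injective Z5 (Ideal.primeCompl_le_nonZeroDivisors (Ideal.span {(5 : ℤ)})))

noncomputable def zeroA1A5 : A5 →ₐ[Z5] A5 :=
  MvPolynomial.aeval fun i => if i = 0 ∨ i = 4 then 0 else MvPolynomial.X i

theorem rho_zeroA1A5 (x : A5) : rho (zeroA1A5 x) = rho x := by
  suffices h : rho.comp zeroA1A5.toRingHom = rho from RingHom.congr_fun h x
  refine MvPolynomial.ringHom_ext (fun c => by simp [zeroA1A5]) (fun i => ?_)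
  fin_cases i <;> simp [zeroA1A5, rho]

theorem zeroA1A5_discRHS : zeroA1A5 discRHS = 5 ^ 15 * (a4 ^ 2 * quarticDisc a2 a3 a4) := by
  have h1 : zeroA1A5 a1 = 0 := by simp [zeroA1A5, a1]
  have h2 : zeroA1A5 a2 = a2 := by simp [zeroA1A5, a2]
  have h3 : zeroA1A5 a3 = a3 := by simp [zeroA1A5, a3]
  have h4 : zeroA1A5 a4 = a4 := by simp [zeroA1A5, a4]
  have h5 : zeroA1A5 a5 = 0 := by simp [zeroA1A5, a5]
  simp only [discRHS, c2, c3, c4, c5, map_add, map_sub, map_mul, map_neg, map_pow, map_ofNat,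
    h1, h2, h3, h4, h5]
  unfold quarticDisc
  ring

/-- `ρ(Δ) = a_4^5 − 2a_3^4a_4^2 − a_2a_3^2a_4^3 + 2a_2^2a_4^4 + a_2^3a_3^2a_4^2 + a_2^4a_4^3`,
where `Δ` is the unique element of `A` with `5^{15}·Δ = discRHS`. -/
theorem rho_discriminant (Δ : A5) (hΔ : (5 : A5) ^ 15 * Δ = discRHS) :
    rho Δ =
      (MvPolynomial.X 2) ^ 5 - 2 * (MvPolynomial.X 1) ^ 4 * (MvPolynomial.X 2) ^ 2
        - (MvPolynomial.X 0) * (MvPolynomial.X 1) ^ 2 * (MvPolynomial.X 2) ^ 3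
        + 2 * (MvPolynomial.X 0) ^ 2 * (MvPolynomial.X 2) ^ 4
        + (MvPolynomial.X 0) ^ 3 * (MvPolynomial.X 1) ^ 2 * (MvPolynomial.X 2) ^ 2
        + (MvPolynomial.X 0) ^ 4 * (MvPolynomial.X 2) ^ 3 := by
  have hspec : zeroA1A5 Δ = a4 ^ 2 * quarticDisc a2 a3 a4 := by
    refine mul_left_cancel₀ (pow_ne_zero 15 (by norm_num : (5 : A5) ≠ 0)) ?_
    rw [← zeroA1A5_discRHS, ← hΔ, map_mul, map_pow, map_ofNat]
  rw [← rho_zeroA1A5, hspec, map_mul, map_pow, map_quarticDisc, quarticDisc_of_charP_five]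
  simp only [rho, a2, a3, a4, MvPolynomial.eval₂Hom_X', Fin.reduceEq, ↓reduceIte]
  ring
end
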